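/- arXiv:1512.04798 — 2 statements merged into one kernel-verified Lean document; each statement's English description precedes it below -/
import Mathlib

section
/- Let f : [θ₁, θ₂] → ℝ be a C¹ function with 0 < θ₁ < θ₂ < π, and define g(θ) := sin(θ)·f(θ). Then ∫_{θ₁}^{θ₂} (g'(θ))²/sin(θ) dθ = ∫_{θ₁}^{θ₂} f(θ)²/sin(θ) dθ + ∫_{θ₁}^{θ₂} sin(θ)·(f'(θ))² dθ, provided f vanishes at θ₁ and θ₂. -/
open Real MeasureTheory intervalIntegral

/-!
Write `g = w f` with the weight `w = sin`. Expanding `(g')² / w = (w'² / w) f² + 2 w' f f' + w f'²`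
and integrating the cross term by parts (`2 f f' = (f²)'`, the boundary terms vanish since
`f = 0` at both ends) turns it into `-∫ w'' f²`. For `w = sin` the resulting weight
`w'² / w - w'' = (cos² + sin²) / sin` is `1 / sin`.
-/

open Set

section WeightedIdentity

variable {a b : ℝ} {w w' w'' f f' : ℝ → ℝ}

theorem integral_sq_deriv_mul_div_eq
    (hab : a ≤ b) (hw : ∀ x, HasDerivAt w (w' x) x) (hw' : ∀ x, HasDerivAt w' (w'' x) x)
    (hw'' : Continuous w'') (hw0 : ∀ x ∈ Icc a b, w x ≠ 0)
    (hf : ContinuousOn f (Icc a b)) (hf' : ContinuousOn f' (Icc a b))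
    (hff' : ∀ x ∈ Ioo a b, HasDerivAt f (f' x) x) (ha : f a = 0) (hb : f b = 0) :
    ∫ x in a..b, (w' x * f x + w x * f' x) ^ 2 / w x
      = (∫ x in a..b, (w' x ^ 2 / w x - w'' x) * f x ^ 2) + ∫ x in a..b, w x * f' x ^ 2 := by
  have hwc : Continuous w := continuous_iff_continuousAt.2 fun x => (hw x).continuousAt
  have hw'c : Continuous w' := continuous_iff_continuousAt.2 fun x => (hw' x).continuousAt
  have hIcc : uIcc a b = Icc a b := uIcc_of_le hab
  have hi₁ : IntervalIntegrable (fun x => (w' x ^ 2 / w x - w'' x) * f x ^ 2) volume a b :=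
    ContinuousOn.intervalIntegrable <| hIcc ▸
      (((hw'c.continuousOn.pow 2).div hwc.continuousOn hw0).sub hw''.continuousOn).mul (hf.pow 2)
  have hi₂ : IntervalIntegrable (fun x => w x * f' x ^ 2) volume a b :=
    ContinuousOn.intervalIntegrable <| hIcc ▸ hwc.continuousOn.mul (hf'.pow 2)
  have hi₃ : IntervalIntegrable (fun x => w'' x * f x ^ 2 + w' x * (2 * f x * f' x)) volume a b :=
    ContinuousOn.intervalIntegrable <| hIcc ▸ (hw''.continuousOn.mul (hf.pow 2)).add
      (hw'c.continuousOn.mul ((continuousOn_const.mul hf).mul hf'))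
  have hcross : ∫ x in a..b, (w'' x * f x ^ 2 + w' x * (2 * f x * f' x)) = 0 := by
    have hderiv : ∀ x ∈ Ioo a b, HasDerivAt (fun x => w' x * f x ^ 2)
        (w'' x * f x ^ 2 + w' x * (2 * f x * f' x)) x := fun x hx =>
      ((hw' x).fun_mul ((hff' x hx).fun_pow 2)).congr_deriv (by push_cast; ring)
    rw [integral_eq_sub_of_hasDerivAt_of_le hab (hw'c.continuousOn.mul (hf.pow 2)) hderiv hi₃]
    simp [ha, hb]
  have hexpand : EqOn (fun x => (w' x * f x + w x * f' x) ^ 2 / w x)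
      (fun x => ((w' x ^ 2 / w x - w'' x) * f x ^ 2 + w x * f' x ^ 2)
        + (w'' x * f x ^ 2 + w' x * (2 * f x * f' x))) (uIcc a b) := fun x hx => by
    have := hw0 x (hIcc ▸ hx)
    field_simp
    ring
  rw [integral_congr hexpand, integral_add (hi₁.add hi₂) hi₃, hcross, add_zero,
    integral_add hi₁ hi₂]

end WeightedIdentity

theorem ContDiffOn.hasDerivAt_derivWithin_Icc {a b x : ℝ} {f : ℝ → ℝ}
    (hf : ContDiffOn ℝ 1 f (Icc a b)) (hx : x ∈ Ioo a b) :
    HasDerivAt f (derivWithin f (Icc a b) x) x :=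
  ((hf.differentiableOn one_ne_zero x (Ioo_subset_Icc_self hx)).hasDerivWithinAt).hasDerivAt
    (Icc_mem_nhds hx.1 hx.2)

/-- For a `C¹` function `f` on `[θ₁, θ₂] ⊆ (0, π)` vanishing at the
endpoints, with `g θ = sin θ * f θ`, one has
`∫ (g')²/sin = ∫ f²/sin + ∫ sin (f')²`. -/
theorem weighted_integration_identity
    (θ₁ θ₂ : ℝ) (hθ₁ : 0 < θ₁) (hθ : θ₁ < θ₂) (hθ₂ : θ₂ < Real.pi)
    (f : ℝ → ℝ) (hf : ContDiffOn ℝ 1 f (Set.Icc θ₁ θ₂))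
    (hf₁ : f θ₁ = 0) (hf₂ : f θ₂ = 0)
    (g : ℝ → ℝ) (hg : g = fun θ => Real.sin θ * f θ) :
    ∫ θ in θ₁..θ₂, (deriv g θ) ^ 2 / Real.sin θ
      = (∫ θ in θ₁..θ₂, (f θ) ^ 2 / Real.sin θ)
        + ∫ θ in θ₁..θ₂, Real.sin θ * (deriv f θ) ^ 2 := by
  -- `deriv f` need not be continuous at the endpoints; the one-sided `derivWithin` is.
  set F := derivWithin f (Icc θ₁ θ₂)
  have hF : ∀ θ ∈ Ioo θ₁ θ₂, HasDerivAt f (F θ) θ := fun θ => hf.hasDerivAt_derivWithin_Icc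
  have hsin : ∀ θ ∈ Icc θ₁ θ₂, sin θ ≠ 0 := fun θ hθ' =>
    (sin_pos_of_pos_of_lt_pi (hθ₁.trans_le hθ'.1) (hθ'.2.trans_lt hθ₂)).ne'
  calc ∫ θ in θ₁..θ₂, (deriv g θ) ^ 2 / sin θ
      = ∫ θ in θ₁..θ₂, (cos θ * f θ + sin θ * F θ) ^ 2 / sin θ :=
        integral_congr_Ioo_of_le hθ.le fun θ hθ' => by
          rw [hg, ((hasDerivAt_sin θ).fun_mul (hF θ hθ')).deriv]
    _ = (∫ θ in θ₁..θ₂, (cos θ ^ 2 / sin θ - -sin θ) * f θ ^ 2)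
          + ∫ θ in θ₁..θ₂, sin θ * F θ ^ 2 :=
        integral_sq_deriv_mul_div_eq hθ.le hasDerivAt_sin hasDerivAt_cos continuous_sin.neg hsin
          hf.continuousOn (hf.continuousOn_derivWithin (uniqueDiffOn_Icc hθ) le_rfl) hF hf₁ hf₂
    _ = _ := by
      congr 1
      · refine integral_congr fun θ hθ' => ?_
        have := hsin θ (uIcc_of_le hθ.le ▸ hθ')
        field_simp
        linear_combination f θ ^ 2 * cos_sq_add_sin_sq θ
      · exact integral_congr_Ioo_of_le hθ.le fun θ hθ' => by rw [(hF θ hθ').deriv]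
end

section
/- (PDE for the auxiliary function.) Let u satisfy div(x₁∇u) = 0 in {u > 0} ∩ {x₁ > 0} and div((1/x₁)∇u) = 0 in {u < 0} ∩ {x₁ > 0} in an open set of ℝ²₊. Define z(x) := x₁u⁺(x) on {u > 0} and z(x) := u⁻(x) on {u ≤ 0}. Then z satisfies the single equation Δz − (1/x₁)∂₁z + x₁^{−2}z⁺ = 0 in {x₁ > 0} (in each phase, classically). -/
open Real MeasureTheory Set Filter Metric
open scoped RealInnerProductSpace

noncomputable section

/-- The plane `ℝ²` as a Euclidean space; the half-plane is `{x | 0 < x 0}`. -/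
abbrev E2 := EuclideanSpace ℝ (Fin 2)

/-- Standard basis vectors of `ℝ²`. -/
def e2 (i : Fin 2) : E2 := EuclideanSpace.single i 1

/-- Divergence of a vector field on `ℝ²`. -/
def div2 (F : E2 → E2) (x : E2) : ℝ :=
  ∑ i, fderiv ℝ (fun y => F y i) x (e2 i)

/-- The gradient of `u` on the positive phase `{u > 0}` (the quantity `∇u⁺`),
extended by `0` elsewhere. -/
def gp (u : E2 → ℝ) (x : E2) : E2 := if 0 < u x then gradient u x else 0

/-- The gradient of `u` on the negative phase `{u < 0}` (the quantity `∇u⁻`),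
extended by `0` elsewhere. -/
def gm (u : E2 → ℝ) (x : E2) : E2 := if u x < 0 then gradient u x else 0

/-- `u` solves the two-phase degenerate system `div(x₁∇u) = 0` in `{u > 0}`,
`div((1/x₁)∇u) = 0` in `{u < 0}` in `Ω ∩ {x₁ > 0}`, with the continuity/regularity
and vanishing-flux conditions on `Ω ∩ {x₁ = 0}`. -/
def SolvesEHD (u : E2 → ℝ) (Ω : Set E2) : Prop :=
  ContinuousOn u (Ω ∩ {x : E2 | 0 < x 0}) ∧
  ContDiffOn ℝ 2 u (Ω ∩ {x : E2 | 0 < x 0} ∩ {x : E2 | u x ≠ 0}) ∧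
  (∀ x ∈ Ω ∩ {x : E2 | 0 < x 0} ∩ {x : E2 | 0 < u x},
    div2 (fun y => y 0 • gradient u y) x = 0) ∧
  (∀ x ∈ Ω ∩ {x : E2 | 0 < x 0} ∩ {x : E2 | u x < 0},
    div2 (fun y => (y 0)⁻¹ • gradient u y) x = 0) ∧
  (∀ p ∈ Ω, p 0 = 0 →
    Tendsto (fun x => x 0 * u x * fderiv ℝ u x (e2 0))
      (nhdsWithin p (Ω ∩ {x : E2 | 0 < u x})) (nhds 0) ∧
    Tendsto (fun x => u x * fderiv ℝ u x (e2 0) / x 0)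
      (nhdsWithin p (Ω ∩ {x : E2 | u x < 0})) (nhds 0))

end

noncomputable section

/-- The Laplacian on `ℝ²`. -/
def lap2 (z : E2 → ℝ) (x : E2) : ℝ :=
  ∑ i, fderiv ℝ (fun y => fderiv ℝ z y (e2 i)) x (e2 i)

/-! On `{u > 0}` the auxiliary function is `z = x₁u`, so `∇z = x₁∇u + u e₁` and
`Δz = div(x₁∇u) + ∂₁u = ∂₁u`, while `∂₁z = x₁∂₁u + u` and `z⁺ = x₁u`; the three terms cancel.
On `{u < 0}` we have `z = u` and `div((1/x₁)∇u) = (1/x₁)(Δu - ∂₁u/x₁)`. Both phases are open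
because `u` is continuous, so the derivatives of `z` are those of the local formula. -/

open Topology

theorem ContDiffOn.contDiffAt_of_ne_zero {F : Type*} [NormedAddCommGroup F] [NormedSpace ℝ F]
    {n : WithTop ℕ∞} {u : F → ℝ} {U : Set F} {x : F} (hU : IsOpen U) (hcont : ContinuousOn u U)
    (hreg : ContDiffOn ℝ n u (U ∩ {y | u y ≠ 0})) (hx : x ∈ U) (hux : u x ≠ 0) :
    ContDiffAt ℝ n u x :=
  (hreg x ⟨hx, hux⟩).contDiffAt <| inter_mem (hU.mem_nhds hx)
    ((hcont.continuousAt (hU.mem_nhds hx)).eventually_ne hux)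

theorem EuclideanSpace.gradient_apply {ι : Type*} [Fintype ι] [DecidableEq ι]
    (f : EuclideanSpace ℝ ι → ℝ) (y : EuclideanSpace ℝ ι) (i : ι) :
    gradient f y i = fderiv ℝ f y (EuclideanSpace.single i 1) := by
  rw [← inner_gradient_left, EuclideanSpace.inner_single_right, one_mul, conj_trivial]

theorem ContDiffAt.differentiableAt_gradient {F : Type*} [NormedAddCommGroup F]
    [InnerProductSpace ℝ F] [CompleteSpace F] {f : F → ℝ} {x : F} (hf : ContDiffAt ℝ 2 f x) :
    DifferentiableAt ℝ (gradient f) x :=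
  (InnerProductSpace.toDual ℝ F).symm.toContinuousLinearEquiv.differentiableAt.comp x
    ((hf.fderiv_right (m := 1) (by norm_num)).differentiableAt (by norm_num))

theorem hasFDerivAt_coord (i : Fin 2) (x : E2) :
    HasFDerivAt (fun y : E2 => y i) (EuclideanSpace.proj i : E2 →L[ℝ] ℝ) x :=
  (EuclideanSpace.proj i : E2 →L[ℝ] ℝ).hasFDerivAt

theorem fderiv_apply_coord {F : E2 → E2} {x : E2} (hF : DifferentiableAt ℝ F x) (i : Fin 2)
    (v : E2) : fderiv ℝ (fun y => F y i) x v = fderiv ℝ F x v i := by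
  rw [show (fun y => F y i) = (fun w : E2 => w i) ∘ F from rfl,
    ((hasFDerivAt_coord i _).comp x hF.hasFDerivAt).fderiv]
  rfl

theorem eq_sum_e2 (v : E2) : v = ∑ i, v i • e2 i := by
  ext i; fin_cases i <;> simp [e2]

theorem div2_eq_sum {F : E2 → E2} {x : E2} (hF : DifferentiableAt ℝ F x) :
    div2 F x = ∑ i, fderiv ℝ F x (e2 i) i := by
  simp only [div2, fderiv_apply_coord hF]

theorem div2_congr_of_eventuallyEq {F G : E2 → E2} {x : E2} (h : F =ᶠ[𝓝 x] G) :
    div2 F x = div2 G x := by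
  simp only [div2]
  refine Finset.sum_congr rfl fun i _ => ?_
  congr 1
  exact Filter.EventuallyEq.fderiv_eq (h.mono fun y hy => congrArg (· i) hy)

theorem div2_const (v x : E2) : div2 (fun _ => v) x = 0 := by
  simp [div2]

theorem div2_add {F G : E2 → E2} {x : E2} (hF : DifferentiableAt ℝ F x)
    (hG : DifferentiableAt ℝ G x) : div2 (fun y => F y + G y) x = div2 F x + div2 G x := by
  rw [div2_eq_sum (hF.fun_add hG), div2_eq_sum hF, div2_eq_sum hG, fderiv_fun_add hF hG,
    ← Finset.sum_add_distrib]
  rfl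

theorem div2_smul {φ : E2 → ℝ} {F : E2 → E2} {x : E2} (hφ : DifferentiableAt ℝ φ x)
    (hF : DifferentiableAt ℝ F x) :
    div2 (fun y => φ y • F y) x = φ x * div2 F x + fderiv ℝ φ x (F x) := by
  conv_rhs => rw [eq_sum_e2 (F x), map_sum]
  rw [div2_eq_sum (hφ.fun_smul hF), div2_eq_sum hF, fderiv_fun_smul hφ hF, Finset.mul_sum,
    ← Finset.sum_add_distrib]
  refine Finset.sum_congr rfl fun i _ => ?_
  simp only [add_apply, smul_apply, ContinuousLinearMap.smulRight_apply, PiLp.add_apply,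
    PiLp.smul_apply, smul_eq_mul, map_smul]
  ring

theorem lap2_eq_div2_gradient (f : E2 → ℝ) : lap2 f = div2 (gradient f) := by
  funext x
  simp only [lap2, div2, EuclideanSpace.gradient_apply]
  rfl

theorem lap2_congr_of_eventuallyEq {f g : E2 → ℝ} {x : E2} (h : f =ᶠ[𝓝 x] g) :
    lap2 f x = lap2 g x := by
  rw [lap2_eq_div2_gradient, lap2_eq_div2_gradient, div2_congr_of_eventuallyEq h.gradient]

theorem fderiv_coord_mul_apply {u : E2 → ℝ} {x : E2} (hu : DifferentiableAt ℝ u x) (v : E2) :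
    fderiv ℝ (fun y => y 0 * u y) x v = x 0 * fderiv ℝ u x v + u x * v 0 := by
  rw [((hasFDerivAt_coord 0 x).fun_mul hu.hasFDerivAt).fderiv]
  simp

theorem gradient_coord_mul {u : E2 → ℝ} {x : E2} (hu : DifferentiableAt ℝ u x) :
    gradient (fun y => y 0 * u y) x = x 0 • gradient u x + u x • e2 0 := by
  ext i
  simp only [EuclideanSpace.gradient_apply, fderiv_coord_mul_apply hu, PiLp.add_apply,
    PiLp.smul_apply, smul_eq_mul]
  simp [e2, eq_comm]

theorem lap2_coord_mul {u : E2 → ℝ} {x : E2} (hu : ContDiffAt ℝ 2 u x) :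
    lap2 (fun y => y 0 * u y) x = div2 (fun y => y 0 • gradient u y) x + fderiv ℝ u x (e2 0) := by
  have hdiff : ∀ᶠ y in 𝓝 x, DifferentiableAt ℝ u y :=
    (hu.eventually (by simp)).mono fun y hy => hy.differentiableAt (by norm_num)
  rw [lap2_eq_div2_gradient, div2_congr_of_eventuallyEq (hdiff.mono fun y => gradient_coord_mul),
    div2_add ((hasFDerivAt_coord 0 x).differentiableAt.fun_smul hu.differentiableAt_gradient)
      ((hu.differentiableAt (by norm_num)).fun_smul (differentiableAt_const (e2 0))),
    div2_smul (hu.differentiableAt (by norm_num)) (differentiableAt_const _), div2_const]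
  simp [e2]

theorem div2_inv_coord_smul_gradient {u : E2 → ℝ} {x : E2} (hx : x 0 ≠ 0)
    (hu : ContDiffAt ℝ 2 u x) :
    div2 (fun y => (y 0)⁻¹ • gradient u y) x
      = (x 0)⁻¹ * (lap2 u x - (x 0)⁻¹ * fderiv ℝ u x (e2 0)) := by
  have hinv : HasFDerivAt (fun y : E2 => (y 0)⁻¹)
      (-(x 0 ^ 2)⁻¹ • (EuclideanSpace.proj 0 : E2 →L[ℝ] ℝ)) x :=
    (hasDerivAt_inv hx).comp_hasFDerivAt x (hasFDerivAt_coord 0 x)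
  rw [div2_smul hinv.differentiableAt hu.differentiableAt_gradient, hinv.fderiv,
    lap2_eq_div2_gradient]
  simp [EuclideanSpace.gradient_apply, e2]
  ring

/-- If `div(x₁∇u) = 0` in `{u > 0} ∩ {x₁ > 0}` and
`div((1/x₁)∇u) = 0` in `{u < 0} ∩ {x₁ > 0}`, then the auxiliary function
`z = x₁u⁺` on `{u > 0}`, `z = u⁻` on `{u ≤ 0}` satisfies the single equation
`Δz - (1/x₁)∂₁z + x₁⁻² z⁺ = 0` classically in each phase in `{x₁ > 0}`. -/
theorem auxiliary_function_equation
    (u : E2 → ℝ) (D : Set E2) (hD : IsOpen D)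
    (hcont : ContinuousOn u (D ∩ {x : E2 | 0 < x 0}))
    (hreg : ContDiffOn ℝ 2 u (D ∩ {x : E2 | 0 < x 0} ∩ {x : E2 | u x ≠ 0}))
    (hPDEp : ∀ x ∈ D ∩ {x : E2 | 0 < x 0} ∩ {x : E2 | 0 < u x},
      div2 (fun y => y 0 • gradient u y) x = 0)
    (hPDEm : ∀ x ∈ D ∩ {x : E2 | 0 < x 0} ∩ {x : E2 | u x < 0},
      div2 (fun y => (y 0)⁻¹ • gradient u y) x = 0)
    (z : E2 → ℝ)
    (hz : z = fun x => if 0 < u x then x 0 * u x else min (u x) 0) :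
    ∀ x ∈ D ∩ {x : E2 | 0 < x 0}, (0 < u x ∨ u x < 0) →
      lap2 z x - (x 0)⁻¹ * fderiv ℝ z x (e2 0) + max (z x) 0 / (x 0) ^ 2 = 0 := by
  intro x hx hphase
  have hx0 : x 0 ≠ 0 := hx.2.ne'
  have hu : ContDiffAt ℝ 2 u x :=
    hreg.contDiffAt_of_ne_zero (hD.inter (isOpen_lt continuous_const (by fun_prop))) hcont hx
      (hphase.elim ne_of_gt ne_of_lt)
  rcases hphase with hpos | hneg
  · have hzu : z =ᶠ[𝓝 x] fun y => y 0 * u y :=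
      (hu.continuousAt.eventually (lt_mem_nhds hpos)).mono fun y hy => by simp [hz, hy]
    rw [lap2_congr_of_eventuallyEq hzu, hzu.fderiv_eq, hzu.self_of_nhds, lap2_coord_mul hu,
      hPDEp x ⟨hx, hpos⟩, fderiv_coord_mul_apply (hu.differentiableAt (by norm_num)),
      max_eq_left (mul_pos hx.2 hpos).le]
    rw [show e2 0 0 = 1 by simp [e2]]
    field_simp
    ring
  · have hzu : z =ᶠ[𝓝 x] u :=
      (hu.continuousAt.eventually (gt_mem_nhds hneg)).mono fun y hy => by
        simp [hz, hy.le, not_lt.2 hy.le]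
    have hdiv := hPDEm x ⟨hx, hneg⟩
    rw [div2_inv_coord_smul_gradient hx0 hu, mul_eq_zero] at hdiv
    rw [lap2_congr_of_eventuallyEq hzu, hzu.fderiv_eq, hzu.self_of_nhds, max_eq_right hneg.le,
      zero_div, add_zero]
    exact hdiv.resolve_left (inv_ne_zero hx0)

end
end
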